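/- There exists a constant χ₃ > 0 such that for all integers N ≥ 1 and all integers j, i with 4 ≤ j ≤ i ≤ N and j ≤ N^{2/5}, the expected hitting time satisfies E[τ_j^{(N,i)}] ≤ χ₃ N/j, where τ_j^{(N,i)} = inf{n ≥ 0 : R^{(N,i)}_n < j}. -/

import Mathlib

open MeasureTheory Filter

universe u

/-- Stirling numbers of the second kind. -/
def stirling2 : ℕ → ℕ → ℕ
  | 0, 0 => 1
  | 0, _ + 1 => 0
  | _ + 1, 0 => 0
  | n + 1, k + 1 => (k + 1) * stirling2 n (k + 1) + stirling2 n k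

/-- The transition matrix `M^{(N)}_{q,p} = S(q,p) · (N)_p / N^q`
(`S(q,p) = 0` for `p > q`, so the entries with `p > q` vanish automatically). -/
noncomputable def transMat (N q p : ℕ) : ENNReal :=
  ((stirling2 q p * Nat.descFactorial N p : ℕ) : ENNReal) / (N : ENNReal) ^ q

/-- `R` is (a version of) the Markov chain with transition matrix `K` started at `i`:
its finite dimensional distributions are the required ones. -/
def IsMarkovChainWith {Ω : Type*} [MeasurableSpace Ω] (P : Measure Ω)
    (R : ℕ → Ω → ℕ) (i : ℕ) (K : ℕ → ℕ → ENNReal) : Prop :=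
  ∀ (n : ℕ) (q : ℕ → ℕ),
    P {ω | ∀ m ≤ n, R m ω = q m} =
      (if q 0 = i then 1 else 0) * ∏ m ∈ Finset.range n, K (q m) (q (m + 1))

/-- First hitting time of the absorbing state `1`. -/
noncomputable def hitOne {Ω : Type*} (R : ℕ → Ω → ℕ) (ω : Ω) : ℕ :=
  sInf {n | R n ω = 1}

/-!
`S(q,p)·(N)_p` is the number of ways to throw `q` labelled balls into `N` boxes so that exactly `p`
boxes are occupied, so from `q` the chain jumps to the number of occupied boxes after throwing `q`
balls uniformly. Its expected exit time from `[j, ∞)` is bounded by Dynkin's drift criterion with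
the Lyapunov function `16 N (1/(j-1) - 1/max(p, j-1))`. By convexity of `1/x`, the drift inequality
reduces to an upper bound on the mean of `max(p, j-1) = p + (j-1-p)⁺`: the expected number of
occupied boxes is at most `q - q(q-1)/(3N)` (Bonferroni), and the expected undershoot
`(j-1-p)⁺` is at most `j(j-1)/(4N)`, since `S(j, j-m) ≤ j^{2m} / (2^m m!)` and `j^5 ≤ N^2` make
the undershoot terms decay geometrically.
-/

open Finset
open scoped ENNReal Nat

lemma stirling2_eq_stirlingSecond : stirling2 = Nat.stirlingSecond := by
  funext n k
  induction n generalizing k with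
  | zero => cases k <;> rfl
  | succ n ih => cases k <;> simp [stirling2, Nat.stirlingSecond_succ_succ, ih]

namespace Nat

lemma pow_add_mul_pow_le_add_one_pow (Q k : ℕ) :
    Q ^ (k + 1) + (k + 1) * Q ^ k ≤ (Q + 1) ^ (k + 1) := by
  induction k with
  | zero => simp
  | succ k ih =>
    calc Q ^ (k + 2) + (k + 2) * Q ^ (k + 1)
        ≤ (Q + 1) * (Q ^ (k + 1) + (k + 1) * Q ^ k) := by ring_nf; omega
      _ ≤ (Q + 1) ^ (k + 2) := by rw [_root_.pow_succ' _ (k + 1)]; gcongr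

lemma two_pow_mul_factorial_mul_stirlingSecond_le (m : ℕ) :
    ∀ p, 2 ^ m * m ! * stirlingSecond (p + m) p ≤ (p + m) ^ (2 * m) := by
  induction m with
  | zero => simp [stirlingSecond_self]
  | succ m ihm =>
    intro p
    induction p with
    | zero => simp
    | succ p ihp =>
      have hQ := pow_add_mul_pow_le_add_one_pow (p + (m + 1)) (2 * m + 1)
      rw [show p + 1 + (m + 1) = (p + 1 + m) + 1 by ring, stirlingSecond_succ_succ,
        show p + 1 + m = p + (m + 1) by ring]
      have h1 := ihm (p + 1)
      rw [show p + 1 + m = p + (m + 1) by ring] at h1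
      calc 2 ^ (m + 1) * (m + 1)! *
            ((p + 1) * stirlingSecond (p + (m + 1)) (p + 1) + stirlingSecond (p + (m + 1)) p)
          = 2 * (m + 1) * (p + 1) * (2 ^ m * m ! * stirlingSecond (p + (m + 1)) (p + 1))
            + 2 ^ (m + 1) * (m + 1)! * stirlingSecond (p + (m + 1)) p := by
            rw [factorial_succ]; ring
        _ ≤ 2 * (m + 1) * (p + (m + 1)) * (p + (m + 1)) ^ (2 * m) +
              (p + (m + 1)) ^ (2 * (m + 1)) := by
            gcongr
            · omega
        _ ≤ (p + (m + 1) + 1) ^ (2 * (m + 1)) := by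
            rw [show 2 * (m + 1) = 2 * m + 1 + 1 by ring]
            nlinarith [hQ, pow_succ (p + (m + 1)) (2 * m)]

lemma two_mul_sub_one_le_factorial (m : ℕ) : 2 * (m - 1) ≤ m ! := by
  rcases lt_or_ge m 2 with hm | hm
  · omega
  · calc 2 * (m - 1) ≤ m * (m - 1) := by gcongr
      _ ≤ m * (m - 1)! := by gcongr; exact self_le_factorial _
      _ = m ! := by
          rw [← mul_factorial_pred (by omega : m ≠ 0)]

end Nat

def imageCount (N q p : ℕ) : ℕ := q.stirlingSecond p * N.descFactorial p

lemma transMat_eq (N q p : ℕ) : transMat N q p = imageCount N q p / (N : ℝ≥0∞) ^ q := by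
  rw [transMat, imageCount, stirling2_eq_stirlingSecond]

lemma imageCount_eq_zero_of_lt {N q p : ℕ} (h : q < p) : imageCount N q p = 0 := by
  simp [imageCount, Nat.stirlingSecond_eq_zero_of_lt h]

lemma imageCount_eq_zero_of_gt {N q p : ℕ} (h : N < p) : imageCount N q p = 0 := by
  simp [imageCount, Nat.descFactorial_eq_zero_iff_lt.2 h]

lemma cast_imageCount_succ_succ (N q p : ℕ) :
    (imageCount N (q + 1) (p + 1) : ℝ) =
      (p + 1) * imageCount N q (p + 1) + ((N : ℝ) - p) * imageCount N q p := by
  rcases le_or_gt p N with hp | hp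
  · simp only [imageCount, Nat.stirlingSecond_succ_succ, Nat.descFactorial_succ]
    push_cast [hp]
    ring
  · simp [imageCount_eq_zero_of_gt hp, imageCount_eq_zero_of_gt (show N < p + 1 by omega)]

/-- One more ball lands in one of the `p` occupied boxes or in one of the `N - p` empty ones. -/
lemma sum_mul_imageCount_succ (N q : ℕ) (w : ℕ → ℝ) :
    ∑ p ∈ range (q + 2), w p * imageCount N (q + 1) p =
      ∑ p ∈ range (q + 1), (p * w p + (N - p) * w (p + 1)) * imageCount N q p := by
  have hshift : ∑ p ∈ range (q + 1), ((p + 1 : ℕ) : ℝ) * w (p + 1) * imageCount N q (p + 1) =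
      ∑ p ∈ range (q + 1), (p : ℝ) * w p * imageCount N q p := by
    have h := sum_range_succ' (fun p : ℕ => (p : ℝ) * w p * imageCount N q p) (q + 1)
    rw [sum_range_succ, imageCount_eq_zero_of_lt (Nat.lt_succ_self q)] at h
    simpa using h.symm
  have hzero : imageCount N (q + 1) 0 = 0 := by simp [imageCount]
  rw [sum_range_succ' _ (q + 1), hzero, Nat.cast_zero, mul_zero, add_zero]
  calc ∑ p ∈ range (q + 1), w (p + 1) * (imageCount N (q + 1) (p + 1) : ℝ)
      = ∑ p ∈ range (q + 1), (((p + 1 : ℕ) : ℝ) * w (p + 1) * imageCount N q (p + 1)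
          + (N - p) * w (p + 1) * imageCount N q p) := by
        refine sum_congr rfl fun p _ => ?_
        rw [cast_imageCount_succ_succ]; push_cast; ring
    _ = _ := by
        rw [sum_add_distrib, hshift, ← sum_add_distrib]
        exact sum_congr rfl fun p _ => by ring

lemma sum_imageCount (N q : ℕ) : ∑ p ∈ range (q + 1), (imageCount N q p : ℝ) = (N : ℝ) ^ q := by
  induction q with
  | zero => simp [imageCount]
  | succ q ih =>
    have := sum_mul_imageCount_succ N q (fun _ => 1)
    simp only [one_mul, mul_one] at this
    rw [this, pow_succ, ← ih, sum_mul]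
    exact sum_congr rfl fun p _ => by ring

/-- The number of occupied boxes is nondecreasing in the number of balls. -/
lemma sum_mul_imageCount_le_of_antitone (N q : ℕ) {w : ℕ → ℝ} (hw : Antitone w) (d : ℕ) :
    ∑ p ∈ range (q + d + 1), w p * imageCount N (q + d) p ≤
      (N : ℝ) ^ d * ∑ p ∈ range (q + 1), w p * imageCount N q p := by
  induction d with
  | zero => simp
  | succ d ih =>
    rw [← add_assoc, sum_mul_imageCount_succ, pow_succ', mul_assoc]
    refine le_trans ?_ (mul_le_mul_of_nonneg_left ih (Nat.cast_nonneg N))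
    rw [mul_sum]
    refine sum_le_sum fun p _ => ?_
    rcases le_or_gt p N with hp | hp
    · have hN : (0 : ℝ) ≤ N - p := by rw [sub_nonneg]; exact_mod_cast hp
      have := mul_le_mul_of_nonneg_left (hw (Nat.le_succ p)) hN
      rw [← mul_assoc]
      gcongr
      linarith
    · simp [imageCount_eq_zero_of_gt hp]

lemma sum_mul_imageCount_succ_self (N q : ℕ) :
    ∑ p ∈ range (q + 2), (p : ℝ) * imageCount N (q + 1) p =
      (N - 1) * ∑ p ∈ range (q + 1), (p : ℝ) * imageCount N q p + (N : ℝ) ^ (q + 1) := by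
  rw [sum_mul_imageCount_succ N q (fun p => p), pow_succ', ← sum_imageCount N q, mul_sum, mul_sum,
    ← sum_add_distrib]
  exact sum_congr rfl fun p _ => by push_cast; ring

/-- The third Bonferroni inequality for the expected number of occupied boxes. -/
lemma sum_mul_imageCount_le_bonferroni {N : ℕ} (hN : 1 ≤ N) (q : ℕ) :
    ∑ p ∈ range (q + 1), (p : ℝ) * imageCount N q p ≤
      (q - q * (q - 1) / (2 * N) + q * (q - 1) * (q - 2) / (6 * N ^ 2)) * (N : ℝ) ^ q := by
  have hN' : (1 : ℝ) ≤ N := by exact_mod_cast hN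
  induction q with
  | zero => simp [imageCount]
  | succ q ih =>
    rw [sum_mul_imageCount_succ_self]
    have hcubic : (0 : ℝ) ≤ q * (q - 1) * (q - 2) := by
      rcases le_or_gt 2 q with hq | hq
      · have : (2 : ℝ) ≤ q := by exact_mod_cast hq
        have : (0 : ℝ) ≤ q - 2 := by linarith
        have : (0 : ℝ) ≤ q - 1 := by linarith
        positivity
      · interval_cases q <;> norm_num
    calc (N - 1) * ∑ p ∈ range (q + 1), (p : ℝ) * imageCount N q p + (N : ℝ) ^ (q + 1)
        ≤ (N - 1) * ((q - q * (q - 1) / (2 * N) + q * (q - 1) * (q - 2) / (6 * N ^ 2)) * N ^ q)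
          + N ^ (q + 1) := by gcongr
      _ ≤ _ := by
        have hrem : (0 : ℝ) ≤ q * (q - 1) * (q - 2) / (6 * N ^ 2) * N ^ q := by positivity
        rw [← sub_nonneg]
        convert hrem using 1
        push_cast
        field_simp
        ring

lemma sum_mul_imageCount_le {N q : ℕ} (hqN : q ≤ N) :
    ∑ p ∈ range (q + 1), (p : ℝ) * imageCount N q p ≤
      (q - q * (q - 1) / (3 * N)) * (N : ℝ) ^ q := by
  rcases Nat.eq_zero_or_pos q with rfl | hq
  · simp [imageCount]
  have hN : (0 : ℝ) < N := by exact_mod_cast hq.trans_le hqN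
  refine (sum_mul_imageCount_le_bonferroni (hq.trans_le hqN) q).trans ?_
  have hq1 : (0 : ℝ) ≤ q * (q - 1) := by
    have : (1 : ℝ) ≤ q := by exact_mod_cast hq
    nlinarith
  have hq2 : (q : ℝ) - 2 ≤ N := by
    have : (q : ℝ) ≤ N := by exact_mod_cast hqN
    linarith
  have : q * (q - 1) * (q - 2) / (6 * N ^ 2) ≤ (q * (q - 1) / (6 * N) : ℝ) := by
    rw [div_le_div_iff₀ (by positivity) (by positivity)]
    have := mul_le_mul_of_nonneg_left hq2 hq1
    nlinarith
  gcongr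
  linarith [show (q * (q - 1) / (3 * N) : ℝ) = q * (q - 1) / (2 * N) - q * (q - 1) / (6 * N) by
    field_simp; ring]

lemma two_pow_mul_sub_one_mul_imageCount_le (N p m : ℕ) :
    2 ^ (m + 1) * (m - 1) * imageCount N (p + m) p ≤ (p + m) ^ (2 * m) * N ^ p :=
  calc 2 ^ (m + 1) * (m - 1) * imageCount N (p + m) p
      = 2 * (m - 1) * (2 ^ m * (p + m).stirlingSecond p) * N.descFactorial p := by
        rw [imageCount]; ring
    _ ≤ m ! * (2 ^ m * (p + m).stirlingSecond p) * N ^ p := by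
        gcongr
        · exact Nat.two_mul_sub_one_le_factorial m
        · exact Nat.descFactorial_le_pow N p
    _ ≤ (p + m) ^ (2 * m) * N ^ p := by
        gcongr
        calc m ! * (2 ^ m * (p + m).stirlingSecond p) = 2 ^ m * m ! * (p + m).stirlingSecond p := by
              ring
          _ ≤ _ := Nat.two_pow_mul_factorial_mul_stirlingSecond_le m p

lemma sub_one_mul_imageCount_add_le {N : ℕ} (hN : 0 < N) (p m : ℕ) :
    ((m - 1 : ℕ) : ℝ) * imageCount N (p + m) p ≤
      ((p + m : ℕ) ^ 2 / (2 * N) : ℝ) ^ m / 2 * (N : ℝ) ^ (p + m) := by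
  have e : ((p + m : ℕ) ^ 2 / (2 * N) : ℝ) ^ m / 2 * (N : ℝ) ^ (p + m) =
      (((p + m) ^ (2 * m) * N ^ p : ℕ) : ℝ) / 2 ^ (m + 1) := by
    push_cast
    rw [pow_mul, pow_add, div_pow, mul_pow, pow_succ]
    field_simp
    ring
  rw [e, le_div_iff₀ (by positivity)]
  exact_mod_cast (le_of_eq (by ring)).trans (two_pow_mul_sub_one_mul_imageCount_le N p m)

lemma sum_sub_one_sub_mul_eq (j : ℕ) (f : ℕ → ℝ) :
    ∑ p ∈ range (j + 1), ((j - 1 - p : ℕ) : ℝ) * f p =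
      ∑ k ∈ range (j - 1), ((k + 1 : ℕ) : ℝ) * f (j - 2 - k) := by
  rcases Nat.eq_zero_or_pos j with rfl | hj
  · simp
  calc ∑ p ∈ range (j + 1), ((j - 1 - p : ℕ) : ℝ) * f p
      = ∑ p ∈ range (j - 1), ((j - 1 - p : ℕ) : ℝ) * f p := by
        rw [show j + 1 = j - 1 + 1 + 1 by omega, sum_range_succ, sum_range_succ]
        simp [show j - 1 - (j - 1 + 1) = 0 by omega]
    _ = _ := by
        rw [← sum_range_reflect]
        refine sum_congr rfl fun k hk => ?_
        rw [mem_range] at hk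
        rw [show j - 1 - (j - 1 - 1 - k) = k + 1 by omega, show j - 1 - 1 - k = j - 2 - k by omega]

lemma sq_le_of_pow_five_le_sq {j N : ℕ} (hjN : j ^ 5 ≤ N ^ 2) : j ^ 2 ≤ N := by
  refine (Nat.pow_le_pow_iff_left two_ne_zero).1 (le_trans ?_ hjN)
  rcases Nat.eq_zero_or_pos j with rfl | hj
  · simp
  · rw [← pow_mul]; exact Nat.pow_le_pow_right hj (by norm_num)

lemma sq_div_sq_le_of_pow_five_le_sq {j N : ℕ} (hj : 3 ≤ j) (hjN : j ^ 5 ≤ N ^ 2) :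
    ((j : ℝ) ^ 2 / (2 * N)) ^ 2 ≤ j * (j - 1) / (4 * N) := by
  have hj3 : (3 : ℝ) ≤ j := by exact_mod_cast hj
  have hN : (0 : ℝ) < N := by
    have : (j : ℝ) ^ 2 ≤ N := by exact_mod_cast sq_le_of_pow_five_le_sq hjN
    nlinarith
  have hcube : (j : ℝ) ^ 3 ≤ (j - 1) * N := by
    refine (pow_le_pow_iff_left₀ (by positivity) (by nlinarith) two_ne_zero).1 ?_
    calc ((j : ℝ) ^ 3) ^ 2 = (j : ℝ) * (j : ℝ) ^ 5 := by ring
      _ ≤ ((j : ℝ) - 1) ^ 2 * (N : ℝ) ^ 2 := by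
          gcongr
          · nlinarith
          · exact_mod_cast hjN
      _ = (((j : ℝ) - 1) * N) ^ 2 := by ring
  rw [div_pow, div_le_div_iff₀ (by positivity) (by positivity)]
  nlinarith [mul_le_mul_of_nonneg_left hcube (by positivity : (0 : ℝ) ≤ 4 * j * N)]

/-- With `b = j² / (2N) ≤ 1/2`, the term with `j - p = m ≥ 2` is at most `b ^ m / 2 · N ^ j`. -/
lemma sum_sub_mul_imageCount_self_le {N j : ℕ} (hj : 3 ≤ j) (hjN : j ^ 5 ≤ N ^ 2) :
    ∑ p ∈ range (j + 1), ((j - 1 - p : ℕ) : ℝ) * imageCount N j p ≤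
      j * (j - 1) / (4 * N) * (N : ℝ) ^ j := by
  have hjN2 := sq_le_of_pow_five_le_sq hjN
  have hN : 0 < N := lt_of_lt_of_le (by positivity) hjN2
  set b : ℝ := (j : ℝ) ^ 2 / (2 * N) with hb
  have hb0 : 0 ≤ b := by positivity
  have hb1 : b ≤ 1 / 2 := by
    rw [hb, div_le_div_iff₀ (by positivity) (by norm_num)]
    have : ((j ^ 2 : ℕ) : ℝ) ≤ N := by exact_mod_cast hjN2
    push_cast at this
    linarith
  calc ∑ p ∈ range (j + 1), ((j - 1 - p : ℕ) : ℝ) * imageCount N j p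
      = ∑ k ∈ range (j - 1), ((k + 1 : ℕ) : ℝ) * imageCount N j (j - 2 - k) :=
        sum_sub_one_sub_mul_eq j _
    _ ≤ ∑ k ∈ range (j - 1), b ^ 2 / 2 * (1 / 2) ^ k * (N : ℝ) ^ j := by
        refine sum_le_sum fun k hk => ?_
        have h := sub_one_mul_imageCount_add_le hN (j - 2 - k) (k + 2)
        rw [mem_range] at hk
        rw [show j - 2 - k + (k + 2) = j by omega, show k + 2 - 1 = k + 1 by omega, ← hb] at h
        calc _ ≤ b ^ (k + 2) / 2 * (N : ℝ) ^ j := h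
          _ = b ^ 2 / 2 * b ^ k * (N : ℝ) ^ j := by ring
          _ ≤ b ^ 2 / 2 * (1 / 2) ^ k * (N : ℝ) ^ j := by gcongr
    _ ≤ b ^ 2 * (N : ℝ) ^ j := by
        rw [← sum_mul, ← mul_sum]
        gcongr
        calc b ^ 2 / 2 * ∑ k ∈ range (j - 1), (1 / 2 : ℝ) ^ k ≤ b ^ 2 / 2 * 2 := by
              gcongr; exact sum_geometric_two_le (j - 1)
          _ = b ^ 2 := by ring
    _ ≤ j * (j - 1) / (4 * N) * (N : ℝ) ^ j := by
        gcongr; exact sq_div_sq_le_of_pow_five_le_sq hj hjN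

lemma sum_sub_mul_imageCount_le {N j q : ℕ} (hj : 3 ≤ j) (hjq : j ≤ q) (hjN : j ^ 5 ≤ N ^ 2) :
    ∑ p ∈ range (q + 1), ((j - 1 - p : ℕ) : ℝ) * imageCount N q p ≤
      j * (j - 1) / (4 * N) * (N : ℝ) ^ q := by
  obtain ⟨d, rfl⟩ := Nat.exists_eq_add_of_le hjq
  have hw : Antitone fun p => ((j - 1 - p : ℕ) : ℝ) := fun a b h => by
    simp only; exact_mod_cast Nat.sub_le_sub_left h _
  calc ∑ p ∈ range (j + d + 1), ((j - 1 - p : ℕ) : ℝ) * imageCount N (j + d) p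
      ≤ (N : ℝ) ^ d * ∑ p ∈ range (j + 1), ((j - 1 - p : ℕ) : ℝ) * imageCount N j p :=
        sum_mul_imageCount_le_of_antitone N j hw d
    _ ≤ (N : ℝ) ^ d * (j * (j - 1) / (4 * N) * (N : ℝ) ^ j) := by
        gcongr; exact sum_sub_mul_imageCount_self_le hj hjN
    _ = j * (j - 1) / (4 * N) * (N : ℝ) ^ (j + d) := by ring

lemma max_sub_one_le_add_sub {j : ℕ} (hj : 1 ≤ j) (p : ℕ) :
    max (p : ℝ) ((j : ℝ) - 1) ≤ p + ((j - 1 - p : ℕ) : ℝ) := by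
  have : (j : ℝ) - 1 = ((j - 1 : ℕ) : ℝ) := by rw [Nat.cast_sub hj, Nat.cast_one]
  rw [this, ← Nat.cast_max]
  exact_mod_cast (show max p (j - 1) ≤ p + (j - 1 - p) by omega)

lemma sum_imageCount_mul_max_le {N j q : ℕ} (hj : 3 ≤ j) (hjq : j ≤ q) (hqN : q ≤ N)
    (hjN : j ^ 5 ≤ N ^ 2) :
    ∑ p ∈ range (q + 1), (imageCount N q p : ℝ) * max (p : ℝ) ((j : ℝ) - 1) ≤
      (q - q * (q - 1) / (12 * N)) * (N : ℝ) ^ q := by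
  have hjR : (3 : ℝ) ≤ j := by exact_mod_cast hj
  have hjqR : (j : ℝ) ≤ q := by exact_mod_cast hjq
  have hN : (0 : ℝ) < N := by exact_mod_cast (show 0 < N by omega)
  calc ∑ p ∈ range (q + 1), (imageCount N q p : ℝ) * max (p : ℝ) ((j : ℝ) - 1)
      ≤ ∑ p ∈ range (q + 1),
          ((p : ℝ) * imageCount N q p + ((j - 1 - p : ℕ) : ℝ) * imageCount N q p) := by
        gcongr with p
        nlinarith [max_sub_one_le_add_sub (by omega : 1 ≤ j) p,
          (Nat.cast_nonneg _ : (0 : ℝ) ≤ imageCount N q p)]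
    _ ≤ (q - q * (q - 1) / (3 * N)) * (N : ℝ) ^ q + j * (j - 1) / (4 * N) * (N : ℝ) ^ q := by
        rw [sum_add_distrib]
        exact add_le_add (sum_mul_imageCount_le hqN) (sum_sub_mul_imageCount_le hj hjq hjN)
    _ ≤ (q - q * (q - 1) / (12 * N)) * (N : ℝ) ^ q := by
        have hgap : (q - q * (q - 1) / (12 * N)) * (N : ℝ) ^ q -
            ((q - q * (q - 1) / (3 * N)) * (N : ℝ) ^ q + j * (j - 1) / (4 * N) * (N : ℝ) ^ q) =
            (q * (q - 1) - j * (j - 1)) / (4 * N) * (N : ℝ) ^ q := by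
          field_simp; ring
        have : (0 : ℝ) ≤ q * (q - 1) - j * (j - 1) := by nlinarith
        have : 0 ≤ (q * (q - 1) - j * (j - 1)) / (4 * N) * (N : ℝ) ^ q := by positivity
        linarith

/-- The tangent line of `x ↦ 1 / x` at `q` lies below its graph. -/
lemma two_div_sub_div_sq_le_one_div {m q : ℝ} (hm : 0 < m) (hq : 0 < q) :
    2 / q - m / q ^ 2 ≤ 1 / m := by
  rw [← sub_nonneg]
  have : 1 / m - (2 / q - m / q ^ 2) = (m - q) ^ 2 / (m * q ^ 2) := by field_simp; ring
  rw [this]; positivity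

lemma le_sum_imageCount_div_max {N j q : ℕ} (hj : 3 ≤ j) (hjq : j ≤ q) (hqN : q ≤ N)
    (hjN : j ^ 5 ≤ N ^ 2) :
    (N : ℝ) ^ q / q + (q - 1) * (N : ℝ) ^ q / (12 * N * q) ≤
      ∑ p ∈ range (q + 1), (imageCount N q p : ℝ) / max (p : ℝ) ((j : ℝ) - 1) := by
  have hj1 : (0 : ℝ) < (j : ℝ) - 1 := by
    have : (3 : ℝ) ≤ j := by exact_mod_cast hj
    linarith
  have hq : (0 : ℝ) < q := by exact_mod_cast (show 0 < q by omega)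
  have hN : (0 : ℝ) < N := by exact_mod_cast (show 0 < N by omega)
  calc (N : ℝ) ^ q / q + (q - 1) * (N : ℝ) ^ q / (12 * N * q)
      = 2 / q * (N : ℝ) ^ q - (q - q * (q - 1) / (12 * N)) * (N : ℝ) ^ q / q ^ 2 := by
        field_simp; ring
    _ ≤ 2 / q * (N : ℝ) ^ q -
          (∑ p ∈ range (q + 1), (imageCount N q p : ℝ) * max (p : ℝ) ((j : ℝ) - 1)) / q ^ 2 := by
        gcongr; exact sum_imageCount_mul_max_le hj hjq hqN hjN
    _ = ∑ p ∈ range (q + 1),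
          (imageCount N q p : ℝ) * (2 / q - max (p : ℝ) ((j : ℝ) - 1) / q ^ 2) := by
        rw [← sum_imageCount N q, mul_sum, sum_div, ← sum_sub_distrib]
        exact sum_congr rfl fun p _ => by ring
    _ ≤ ∑ p ∈ range (q + 1), (imageCount N q p : ℝ) / max (p : ℝ) ((j : ℝ) - 1) := by
        refine sum_le_sum fun p _ => ?_
        rw [div_eq_mul_one_div (imageCount N q p : ℝ)]
        exact mul_le_mul_of_nonneg_left
          (two_div_sub_div_sq_le_one_div (lt_max_of_lt_right hj1) hq) (Nat.cast_nonneg _)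

noncomputable def potential (N j p : ℕ) : ℝ :=
  16 * N * (1 / ((j : ℝ) - 1) - 1 / max (p : ℝ) ((j : ℝ) - 1))

lemma potential_nonneg {N j : ℕ} (hj : 2 ≤ j) (p : ℕ) : 0 ≤ potential N j p := by
  have hj1 : (0 : ℝ) < (j : ℝ) - 1 := by
    have : (2 : ℝ) ≤ j := by exact_mod_cast hj
    linarith
  unfold potential
  have := one_div_le_one_div_of_le hj1 (le_max_right (p : ℝ) ((j : ℝ) - 1))
  have : (0 : ℝ) ≤ N := Nat.cast_nonneg N
  nlinarith

lemma potential_le {N j : ℕ} (hj : 4 ≤ j) (p : ℕ) : potential N j p ≤ 64 / 3 * N / j := by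
  have hjR : (4 : ℝ) ≤ j := by exact_mod_cast hj
  have hN : (0 : ℝ) ≤ N := Nat.cast_nonneg N
  have : 0 < 1 / max (p : ℝ) ((j : ℝ) - 1) :=
    one_div_pos.2 (lt_max_of_lt_right (by linarith))
  calc potential N j p ≤ 16 * N * (1 / ((j : ℝ) - 1)) := by
        unfold potential; gcongr; linarith
    _ ≤ 64 / 3 * N / j := by
        rw [mul_one_div, div_le_div_iff₀ (by linarith) (by linarith)]
        nlinarith

/-- The drift inequality `M u + 1 ≤ u` for `u = potential N j` at `q ∈ [j, N]`, times `N ^ q`. -/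
lemma sum_imageCount_mul_potential_add_le {N j q : ℕ} (hj : 4 ≤ j) (hjq : j ≤ q) (hqN : q ≤ N)
    (hjN : j ^ 5 ≤ N ^ 2) :
    ∑ p ∈ range (q + 1), (imageCount N q p : ℝ) * potential N j p + (N : ℝ) ^ q ≤
      potential N j q * (N : ℝ) ^ q := by
  have hq : (4 : ℝ) ≤ q := by exact_mod_cast hj.trans hjq
  have hN : (0 : ℝ) < N := by exact_mod_cast (show 0 < N by omega)
  set X : ℝ := (N : ℝ) ^ q
  set A := ∑ p ∈ range (q + 1), (imageCount N q p : ℝ) / max (p : ℝ) ((j : ℝ) - 1)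
  have hA : X / q + (q - 1) * X / (12 * N * q) ≤ A :=
    le_sum_imageCount_div_max (by omega) hjq hqN hjN
  have hexpand : ∑ p ∈ range (q + 1), (imageCount N q p : ℝ) * potential N j p =
      16 * N * (X / ((j : ℝ) - 1)) - 16 * N * A := by
    rw [← show ∑ p ∈ range (q + 1), (imageCount N q p : ℝ) = X from sum_imageCount N q, sum_div,
      mul_sum, mul_sum, ← sum_sub_distrib]
    exact sum_congr rfl fun p _ => by simp only [potential]; ring
  have hpotq : potential N j q * X = 16 * N * (X / ((j : ℝ) - 1)) - 16 * N * (X / q) := by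
    have : (j : ℝ) - 1 ≤ q := by linarith [(Nat.cast_le (α := ℝ)).2 hjq]
    simp only [potential, max_eq_left this]
    ring
  have hX : X ≤ 16 * N * ((q - 1) * X / (12 * N * q)) := by
    rw [show 16 * N * ((q - 1) * X / (12 * N * q)) = 4 * (q - 1) / (3 * q) * X by field_simp; ring]
    have : 1 ≤ 4 * ((q : ℝ) - 1) / (3 * q) := by rw [le_div_iff₀ (by linarith)]; linarith
    nlinarith [show 0 < X by positivity]
  rw [hexpand, hpotq]
  nlinarith [mul_le_mul_of_nonneg_left hA (show (0 : ℝ) ≤ 16 * N by positivity)]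

section KilledChain

variable {K : ℕ → ℕ → ℝ≥0∞} {S : Set ℕ} {i : ℕ}

noncomputable def pathWeight (K : ℕ → ℕ → ℝ≥0∞) (i : ℕ) {n : ℕ} (a : Fin (n + 1) → ℕ) : ℝ≥0∞ :=
  (if a 0 = i then 1 else 0) * ∏ m : Fin n, K (a m.castSucc) (a m.succ)

lemma pathWeight_snoc {n : ℕ} (a : Fin (n + 1) → ℕ) (x : ℕ) :
    pathWeight K i (Fin.snoc a x : Fin (n + 2) → ℕ) = pathWeight K i a * K (a (Fin.last n)) x := by
  have h0 : (Fin.snoc a x : Fin (n + 2) → ℕ) 0 = a 0 := Fin.snoc_castSucc (α := fun _ => ℕ) x a 0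
  simp only [pathWeight, h0, Fin.prod_univ_castSucc, Fin.snoc_castSucc, Fin.succ_castSucc,
    Fin.succ_last, Fin.snoc_last, mul_assoc]

/-- `E[f (R n); R 0, …, R n ∈ S]` for the chain `R` with kernel `K` started at `i`. -/
noncomputable def killedExpectation (K : ℕ → ℕ → ℝ≥0∞) (S : Set ℕ) (i n : ℕ) (f : ℕ → ℝ≥0∞) :
    ℝ≥0∞ :=
  ∑' a : Fin (n + 1) → ℕ,
    (Set.univ.pi fun _ => S).indicator (fun a => pathWeight K i a * f (a (Fin.last n))) a

lemma killedExpectation_zero_le (u : ℕ → ℝ≥0∞) : killedExpectation K S i 0 u ≤ u i := by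
  rw [killedExpectation, ← (Equiv.funUnique (Fin 1) ℕ).symm.tsum_eq]
  calc _ ≤ ∑' x : ℕ, if x = i then u i else 0 := by
        refine ENNReal.tsum_le_tsum fun x => (Set.indicator_le_self _ _ _).trans_eq ?_
        by_cases hx : x = i <;> simp [pathWeight, hx]
    _ = u i := tsum_ite_eq i _

lemma killedExpectation_succ_le (u : ℕ → ℝ≥0∞) (n : ℕ) :
    killedExpectation K S i (n + 1) u ≤
      killedExpectation K S i n fun q => ∑' p, K q p * u p := by
  rw [killedExpectation, killedExpectation, ← (Fin.snocEquiv fun _ => ℕ).tsum_eq,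
    ENNReal.tsum_prod', ENNReal.tsum_comm]
  refine ENNReal.tsum_le_tsum fun a => ?_
  by_cases ha : a ∈ Set.univ.pi fun _ => S
  · rw [Set.indicator_of_mem ha, ← ENNReal.tsum_mul_left]
    refine ENNReal.tsum_le_tsum fun x => (Set.indicator_le_self _ _ _).trans_eq ?_
    rw [show (Fin.snocEquiv fun _ => ℕ) (x, a) = Fin.snoc a x from rfl, pathWeight_snoc,
      Fin.snoc_last, mul_assoc]
  · rw [Set.indicator_of_notMem ha]
    refine le_of_eq (ENNReal.tsum_eq_zero.2 fun x => Set.indicator_of_notMem ?_ _)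
    simp only [Set.mem_univ_pi] at ha ⊢
    push Not at ha ⊢
    obtain ⟨m, hm⟩ := ha
    exact ⟨m.castSucc, by simpa using hm⟩

lemma killedExpectation_one_add_succ_le {u : ℕ → ℝ≥0∞}
    (hu : ∀ q ∈ S, ∑' p, K q p * u p + 1 ≤ u q) (n : ℕ) :
    killedExpectation K S i n 1 + killedExpectation K S i (n + 1) u ≤
      killedExpectation K S i n u := by
  refine (add_le_add le_rfl (killedExpectation_succ_le u n)).trans ?_
  rw [killedExpectation, killedExpectation, killedExpectation, ← ENNReal.tsum_add]
  refine ENNReal.tsum_le_tsum fun a => ?_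
  by_cases ha : a ∈ Set.univ.pi fun _ => S
  · simp only [Set.indicator_of_mem ha, Pi.one_apply, mul_one]
    calc pathWeight K i a + pathWeight K i a * ∑' p, K (a (Fin.last n)) p * u p
        = pathWeight K i a * (∑' p, K (a (Fin.last n)) p * u p + 1) := by ring
      _ ≤ pathWeight K i a * u (a (Fin.last n)) := by
        gcongr; exact hu _ (Set.mem_univ_pi.1 ha _)
  · simp [Set.indicator_of_notMem ha]

lemma tsum_killedExpectation_one_le {u : ℕ → ℝ≥0∞} (hu : ∀ q ∈ S, ∑' p, K q p * u p + 1 ≤ u q) :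
    ∑' n, killedExpectation K S i n 1 ≤ u i := by
  have htele : ∀ T,
      ∑ n ∈ range T, killedExpectation K S i n 1 + killedExpectation K S i T u ≤ u i := by
    intro T
    induction T with
    | zero => simpa using killedExpectation_zero_le u
    | succ T ih =>
      calc ∑ n ∈ range (T + 1), killedExpectation K S i n 1 + killedExpectation K S i (T + 1) u
          = ∑ n ∈ range T, killedExpectation K S i n 1 +
              (killedExpectation K S i T 1 + killedExpectation K S i (T + 1) u) := by
            rw [sum_range_succ, add_assoc]
        _ ≤ ∑ n ∈ range T, killedExpectation K S i n 1 + killedExpectation K S i T u := by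
            gcongr; exact killedExpectation_one_add_succ_le hu T
        _ ≤ u i := ih
  exact ENNReal.tsum_le_of_sum_range_le fun T => le_self_add.trans (htele T)

end KilledChain

namespace IsMarkovChainWith

variable {Ω : Type*} [MeasurableSpace Ω] {P : Measure Ω} {R : ℕ → Ω → ℕ} {i : ℕ}
  {K : ℕ → ℕ → ℝ≥0∞}

lemma measure_cylinder (hR : IsMarkovChainWith P R i K) {n : ℕ} (a : Fin (n + 1) → ℕ) :
    P {ω | ∀ m : Fin (n + 1), R m ω = a m} = pathWeight K i a := by
  let q : ℕ → ℕ := fun m => if h : m < n + 1 then a ⟨m, h⟩ else 0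
  have hset : {ω | ∀ m : Fin (n + 1), R m ω = a m} = {ω | ∀ m ≤ n, R m ω = q m} := by
    ext ω
    constructor
    · intro h m hm
      simp only [q, dif_pos (show m < n + 1 by omega)]
      exact h ⟨m, _⟩
    · intro h m
      have := h m (by omega)
      simp only [q, dif_pos m.isLt] at this
      exact this
  have hq : ∀ m : Fin (n + 1), q m = a m := fun m => dif_pos m.isLt
  rw [hset, hR n q, pathWeight, ← Fin.prod_univ_eq_prod_range, show q 0 = a 0 from hq 0]
  congr 1
  exact prod_congr rfl fun m _ => by
    rw [show q m = a m.castSucc from hq m.castSucc, show q (m + 1) = a m.succ from hq m.succ]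

lemma measure_forall_le_mem_le (hR : IsMarkovChainWith P R i K) (S : Set ℕ) (n : ℕ) :
    P {ω | ∀ m ≤ n, R m ω ∈ S} ≤ killedExpectation K S i n 1 := by
  let alive := Set.univ.pi fun _ : Fin (n + 1) => S
  calc P {ω | ∀ m ≤ n, R m ω ∈ S}
      ≤ P (⋃ a : alive, {ω | ∀ m : Fin (n + 1), R m ω = a.1 m}) := by
        refine measure_mono fun ω hω => Set.mem_iUnion.2 ⟨⟨fun m => R m ω, ?_⟩, fun m => rfl⟩
        exact Set.mem_univ_pi.2 fun m => hω m (by omega)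
    _ ≤ ∑' a : alive, P {ω | ∀ m : Fin (n + 1), R m ω = a.1 m} := measure_iUnion_le _
    _ = killedExpectation K S i n 1 := by
        simp only [hR.measure_cylinder, killedExpectation, Pi.one_apply, mul_one]
        exact tsum_subtype alive (pathWeight K i)

theorem lintegral_exitTime_le (hR : IsMarkovChainWith P R i K) {S : Set ℕ} {u : ℕ → ℝ≥0∞}
    (hu : ∀ q ∈ S, ∑' p, K q p * u p + 1 ≤ u q) :
    ∫⁻ ω, ((sInf {n | R n ω ∉ S} : ℕ) : ℝ≥0∞) ∂P ≤ u i := by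
  let A : ℕ → Set Ω := fun n => toMeasurable P {ω | ∀ m ≤ n, R m ω ∈ S}
  have hA : ∀ n, MeasurableSet (A n) := fun n => measurableSet_toMeasurable _ _
  have hτ : ∀ ω, ((sInf {n | R n ω ∉ S} : ℕ) : ℝ≥0∞) ≤ ∑' n, (A n).indicator 1 ω := by
    intro ω
    set τ := sInf {n | R n ω ∉ S}
    have hmem : ∀ n ∈ range τ, ω ∈ A n := fun n hn =>
      subset_toMeasurable P _ fun m hm =>
        not_not.1 (Nat.notMem_of_lt_sInf (hm.trans_lt (mem_range.1 hn)))
    calc (τ : ℝ≥0∞) = ∑ n ∈ range τ, (A n).indicator 1 ω := by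
          rw [sum_congr rfl fun n hn => Set.indicator_of_mem (hmem n hn) 1]
          simp
      _ ≤ ∑' n, (A n).indicator 1 ω := ENNReal.sum_le_tsum _
  calc ∫⁻ ω, ((sInf {n | R n ω ∉ S} : ℕ) : ℝ≥0∞) ∂P
      ≤ ∫⁻ ω, ∑' n, (A n).indicator 1 ω ∂P := lintegral_mono hτ
    _ = ∑' n, P {ω | ∀ m ≤ n, R m ω ∈ S} := by
        rw [lintegral_tsum fun n => (measurable_one.indicator (hA n)).aemeasurable]
        simp [lintegral_indicator_one (hA _), A]
    _ ≤ ∑' n, killedExpectation K S i n 1 :=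
        ENNReal.tsum_le_tsum fun n => hR.measure_forall_le_mem_le S n
    _ ≤ u i := tsum_killedExpectation_one_le hu

end IsMarkovChainWith

/-- `potential` made infinite above `N`, where the chain started at `i ≤ N` never goes, so that the
drift condition holds trivially there. -/
noncomputable def lyapunov (N j p : ℕ) : ℝ≥0∞ :=
  if p ≤ N then ENNReal.ofReal (potential N j p) else ⊤

lemma tsum_transMat_mul_lyapunov_add_one_le {N j q : ℕ} (hj : 4 ≤ j) (hjq : j ≤ q)
    (hjN : j ^ 5 ≤ N ^ 2) :
    ∑' p, transMat N q p * lyapunov N j p + 1 ≤ lyapunov N j q := by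
  by_cases hqN : q ≤ N
  swap
  · simp [lyapunov, hqN]
  have hX : (0 : ℝ) < (N : ℝ) ^ q := by
    have : (0 : ℝ) < N := by exact_mod_cast (show 0 < N by omega)
    positivity
  have hterm : ∀ p ∈ range (q + 1), transMat N q p * lyapunov N j p =
      ENNReal.ofReal (imageCount N q p / (N : ℝ) ^ q * potential N j p) := by
    intro p hp
    rw [lyapunov, if_pos (by rw [mem_range] at hp; omega), transMat_eq,
      ENNReal.ofReal_mul (by positivity), ENNReal.ofReal_div_of_pos hX,
      ENNReal.ofReal_pow (by positivity), ENNReal.ofReal_natCast, ENNReal.ofReal_natCast]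
  have hpot : ∀ p ∈ range (q + 1), 0 ≤ imageCount N q p / (N : ℝ) ^ q * potential N j p :=
    fun p _ => mul_nonneg (by positivity) (potential_nonneg (by omega) p)
  rw [tsum_eq_sum (s := range (q + 1)) fun p hp => by
      rw [transMat_eq, imageCount_eq_zero_of_lt (by rw [mem_range] at hp; omega)]; simp,
    sum_congr rfl hterm, ← ENNReal.ofReal_sum_of_nonneg hpot, lyapunov, if_pos hqN,
    ← ENNReal.ofReal_one, ← ENNReal.ofReal_add (sum_nonneg hpot) zero_le_one]
  refine ENNReal.ofReal_le_ofReal ?_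
  calc ∑ p ∈ range (q + 1), imageCount N q p / (N : ℝ) ^ q * potential N j p + 1
      = (∑ p ∈ range (q + 1), (imageCount N q p : ℝ) * potential N j p + (N : ℝ) ^ q) /
          (N : ℝ) ^ q := by
        rw [add_div, sum_div, div_self hX.ne']
        congr 1
        exact sum_congr rfl fun p _ => by ring
    _ ≤ potential N j q * (N : ℝ) ^ q / (N : ℝ) ^ q := by
        gcongr; exact sum_imageCount_mul_potential_add_le hj hjq hqN hjN
    _ = potential N j q := by field_simp

lemma pow_five_le_sq_of_le_rpow {j N : ℕ} (h : (j : ℝ) ≤ (N : ℝ) ^ ((2 : ℝ) / 5)) :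
    j ^ 5 ≤ N ^ 2 := by
  have h5 := pow_le_pow_left₀ (Nat.cast_nonneg j) h 5
  rw [← Real.rpow_natCast ((N : ℝ) ^ ((2 : ℝ) / 5)), ← Real.rpow_mul (Nat.cast_nonneg N)] at h5
  norm_num at h5
  exact_mod_cast h5

/-- There is a constant `χ₃ > 0` such that for all `4 ≤ j ≤ i ≤ N` with `j ≤ N^{2/5}`, the
expected hitting time of the chain `R^{(N,i)}` satisfies `E[τ_j^{(N,i)}] ≤ χ₃ N/j`, where
`τ_j^{(N,i)} = inf{n ≥ 0 : R_n < j}`. -/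
theorem expected_hitting_time_bound :
    ∃ χ₃ : ℝ, 0 < χ₃ ∧
      ∀ (N j i : ℕ), 4 ≤ j → j ≤ i → i ≤ N → (j : ℝ) ≤ (N : ℝ) ^ ((2 : ℝ) / 5) →
      ∀ (Ω : Type u) (_ : MeasurableSpace Ω) (P : Measure Ω), IsProbabilityMeasure P →
      ∀ (R : ℕ → Ω → ℕ), IsMarkovChainWith P R i (transMat N) →
        (∫⁻ ω, ((sInf {n | R n ω < j} : ℕ) : ENNReal) ∂P) ≤
          ENNReal.ofReal (χ₃ * (N : ℝ) / (j : ℝ)) := by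
  refine ⟨64 / 3, by norm_num, fun N j i hj hji hiN hjN Ω _ P _ R hR => ?_⟩
  have hexit : ∀ ω, {n | R n ω < j} = {n | R n ω ∉ {p | j ≤ p}} := fun ω => by
    ext n; simp
  calc ∫⁻ ω, ((sInf {n | R n ω < j} : ℕ) : ℝ≥0∞) ∂P
      = ∫⁻ ω, ((sInf {n | R n ω ∉ {p | j ≤ p}} : ℕ) : ℝ≥0∞) ∂P := by simp only [hexit]
    _ ≤ lyapunov N j i :=
        hR.lintegral_exitTime_le fun q hq =>
          tsum_transMat_mul_lyapunov_add_one_le hj hq (pow_five_le_sq_of_le_rpow hjN)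
    _ = ENNReal.ofReal (potential N j i) := if_pos hiN
    _ ≤ ENNReal.ofReal (64 / 3 * N / j) := ENNReal.ofReal_le_ofReal (potential_le hj i)
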